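/- Let C be a topos. Then: (a) monomorphisms are stable under pushout, i.e., given a pushout square with horizontal morphisms f : A → B and B → B +_A C and vertical morphisms g : A → C and C → B +_A C, if f is a monomorphism then the morphism C → B +_A C opposite to it is a monomorphism; and (b) every pushout square along a monomorphism is also a pullback square, i.e., if f : A → B is a monomorphism and the square with f, g : A → C and the pushout B +_A C is a pushout, then that square is a pullback. -/

import Mathlib

/-!
(a) Let `f : A ⟶ B` be mono and `g : A ⟶ X`. Both the relation `⟨g, f⟩ : A ⟶ X ⨯ B` pulled back
along `𝟙 × f` and the diagonal of `X` pulled back along `𝟙 × g` are the graph of `g`, so their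
classifying maps agree on `X ⨯ A`. Transposing along `X ⨯ - ⊣ Ω^X` gives `k : B ⟶ Ω^X` with
`f ≫ k = g ≫ {·}`, where the singleton map `{·} : X ⟶ Ω^X` is mono. The induced map out of the
pushout restricts to `{·}` along `i`, so `i` is mono.

(b) The characteristic map of `f` and the constant map `true` on `X` agree on `A`, hence descend to
the pushout; a cone over `h` and `i` then lands in the part of `B` classified as true, i.e. in `A`.
-/

open CategoryTheory CategoryTheory.Limits

universe v u

/-- A category (with a terminal object) has a subobject classifier if there is a morphism
`truth : ⊤_ C ⟶ Ω` such that every monomorphism is a pullback of `truth` along a unique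
characteristic morphism. -/
class HasSubobjectClassifier (C : Type u) [Category.{v} C] [HasTerminal C] : Prop where
  exists_classifier : ∃ (Ω : C) (truth : ⊤_ C ⟶ Ω), ∀ {U X : C} (m : U ⟶ X), Mono m →
    ∃! χ : X ⟶ Ω, IsPullback m (terminal.from U) χ truth

/-- A topos is a category with finite limits that is cartesian closed and has a
subobject classifier. -/
class IsTopos (C : Type u) [Category.{v} C] extends HasFiniteLimits C : Prop where
  cartesianClosed : ∀ X : C, (prod.functor.obj X).IsLeftAdjoint
  hasSubobjectClassifier : _root_.HasSubobjectClassifier C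

section

variable {𝒞 : Type u} [Category.{v} 𝒞]

section Products

variable [HasBinaryProducts 𝒞]

lemma isPullback_prodLift_prodMap_of_mono {A B X : 𝒞} (f : A ⟶ B) (g : A ⟶ X) [Mono f] :
    IsPullback (prod.lift g (𝟙 A)) (𝟙 A) (prod.map (𝟙 X) f) (prod.lift g f) :=
  IsPullback.of_vert_isIso_mono ⟨by ext <;> simp⟩

lemma isPullback_graph_diag {A X : 𝒞} (g : A ⟶ X) :
    IsPullback (prod.lift g (𝟙 A)) g (prod.map (𝟙 X) g) (diag X) := by
  refine IsPullback.of_isLimit' ⟨by ext <;> simp⟩ <|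
    PullbackCone.IsLimit.mk _ (fun s => s.fst ≫ prod.snd) (fun s => ?_) (fun s => ?_)
      (fun s m hm _ => by simpa [prod.lift_snd] using hm =≫ prod.snd)
  all_goals
    have hfst := s.condition =≫ prod.fst
    have hsnd := s.condition =≫ prod.snd
    simp only [Category.assoc, prod.map_fst, prod.map_snd, diag, prod.lift_fst, prod.lift_snd,
      Category.comp_id] at hfst hsnd
  · ext <;> simp [prod.lift_fst, prod.lift_snd, hfst, hsnd]
  · simpa using hsnd

lemma eq_of_isPullback_diag {T X Ω₀ Ω : 𝒞} {e : X ⟶ Ω₀} {χ : X ⨯ X ⟶ Ω} {t : Ω₀ ⟶ Ω}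
    (hδ : IsPullback (diag X) e χ t) {u v : T ⟶ X}
    (huv : prod.lift u v ≫ χ = prod.lift u u ≫ χ) : u = v := by
  have hlift := hδ.lift_fst (prod.lift u v) (u ≫ e)
    (by rw [huv, ← prod.comp_diag, Category.assoc, hδ.w, Category.assoc])
  have hu := hlift =≫ prod.fst
  have hv := hlift =≫ prod.snd
  simp only [Category.assoc, diag, prod.lift_fst, prod.lift_snd, Category.comp_id] at hu hv
  exact hu.symm.trans hv

lemma mono_homEquiv_of_isPullback_diag {X Ω₀ Ω : 𝒞} {e : X ⟶ Ω₀} {χ : X ⨯ X ⟶ Ω}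
    {t : Ω₀ ⟶ Ω} (hδ : IsPullback (diag X) e χ t) {G : 𝒞 ⥤ 𝒞} (adj : prod.functor.obj X ⊣ G) :
    Mono (adj.homEquiv X Ω χ) := by
  refine ⟨fun {T} u v huv => ?_⟩
  have hmap : prod.map (𝟙 X) u ≫ χ = prod.map (𝟙 X) v ≫ χ := by
    apply (adj.homEquiv T Ω).injective
    exact (adj.homEquiv_naturality_left u χ).trans
      (huv.trans (adj.homEquiv_naturality_left v χ).symm)
  symm
  apply eq_of_isPullback_diag hδ
  simpa using prod.lift v (𝟙 T) ≫= hmap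

end Products

def IsSubobjectClassifier [HasTerminal 𝒞] {Ω : 𝒞} (t : ⊤_ 𝒞 ⟶ Ω) : Prop :=
  ∀ {U X : 𝒞} (m : U ⟶ X), Mono m → ∃! χ : X ⟶ Ω, IsPullback m (terminal.from U) χ t

namespace IsSubobjectClassifier

variable [HasTerminal 𝒞] {Ω : 𝒞} {t : ⊤_ 𝒞 ⟶ Ω}

lemma exists_isPullback (ht : IsSubobjectClassifier t) {U X : 𝒞} (m : U ⟶ X) [Mono m] :
    ∃ χ : X ⟶ Ω, IsPullback m (terminal.from U) χ t :=
  (ht m inferInstance).exists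

lemma eq_of_isPullback (ht : IsSubobjectClassifier t) {U X : 𝒞} {m : U ⟶ X} [Mono m]
    {χ χ' : X ⟶ Ω} (hχ : IsPullback m (terminal.from U) χ t)
    (hχ' : IsPullback m (terminal.from U) χ' t) : χ = χ' :=
  (ht m inferInstance).unique hχ hχ'

lemma isPullback_of_isPushout (ht : IsSubobjectClassifier t) {A B X P : 𝒞} {f : A ⟶ B}
    {g : A ⟶ X} {h : B ⟶ P} {i : X ⟶ P} (H : IsPushout f g h i) [Mono f] [Mono i] :
    IsPullback f g h i := by
  obtain ⟨χf, hχf⟩ := ht.exists_isPullback f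
  have hw : f ≫ χf = g ≫ terminal.from X ≫ t := by
    rw [hχf.w, ← Category.assoc, terminal.comp_from]
  refine IsPullback.of_isLimit' ⟨H.w⟩ <|
    PullbackCone.IsLimit.mk _ (fun s => hχf.lift s.fst (terminal.from s.pt) ?_)
      (fun s => hχf.lift_fst _ _ _) (fun s => ?_) (fun s m hm _ => ?_)
  · rw [← H.inl_desc χf (terminal.from X ≫ t) hw, ← Category.assoc, s.condition,
      Category.assoc, H.inr_desc, ← Category.assoc, terminal.comp_from]
  · rw [← cancel_mono i, Category.assoc, ← H.w, ← Category.assoc, hχf.lift_fst, s.condition]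
  · rw [← cancel_mono f, hχf.lift_fst, hm]

variable [HasBinaryProducts 𝒞]

lemma prodMap_comp_eq_of_isPullback (ht : IsSubobjectClassifier t) {A B X : 𝒞} (f : A ⟶ B)
    (g : A ⟶ X) [Mono f] {χm : X ⨯ B ⟶ Ω} {χδ : X ⨯ X ⟶ Ω}
    (hm : IsPullback (prod.lift g f) (terminal.from A) χm t)
    (hδ : IsPullback (diag X) (terminal.from X) χδ t) :
    prod.map (𝟙 X) f ≫ χm = prod.map (𝟙 X) g ≫ χδ := by
  apply ht.eq_of_isPullback (m := prod.lift g (𝟙 A))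
  · simpa using (isPullback_prodLift_prodMap_of_mono f g).paste_vert hm
  · simpa using (isPullback_graph_diag g).paste_vert hδ

lemma mono_of_isPushout (ht : IsSubobjectClassifier t) {A B X P : 𝒞} {f : A ⟶ B}
    {g : A ⟶ X} {h : B ⟶ P} {i : X ⟶ P} [(prod.functor.obj X).IsLeftAdjoint]
    (H : IsPushout f g h i) [Mono f] : Mono i := by
  obtain ⟨χm, hm⟩ := ht.exists_isPullback (prod.lift g f)
  obtain ⟨χδ, hδ⟩ := ht.exists_isPullback (diag X)
  let adj := Adjunction.ofIsLeftAdjoint (prod.functor.obj X)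
  have hcomm : f ≫ adj.homEquiv B Ω χm = g ≫ adj.homEquiv X Ω χδ := by
    refine (adj.homEquiv_naturality_left f χm).symm.trans ?_
    refine .trans ?_ (adj.homEquiv_naturality_left g χδ)
    exact congrArg (adj.homEquiv A Ω) (ht.prodMap_comp_eq_of_isPullback f g hm hδ)
  have := mono_homEquiv_of_isPullback_diag hδ adj
  exact mono_of_mono_fac (H.inr_desc _ _ hcomm)

end IsSubobjectClassifier

end

theorem stmt14_general {𝒞 : Type u} [Category.{v} 𝒞] [IsTopos 𝒞] :
    (∀ {A B X P : 𝒞} (f : A ⟶ B) (g : A ⟶ X) (h : B ⟶ P) (i : X ⟶ P),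
      IsPushout f g h i → Mono f → Mono i) ∧
    (∀ {A B X P : 𝒞} (f : A ⟶ B) (g : A ⟶ X) (h : B ⟶ P) (i : X ⟶ P),
      IsPushout f g h i → Mono f → IsPullback f g h i) := by
  obtain ⟨Ω, t, ht⟩ := IsTopos.hasSubobjectClassifier.exists_classifier (C := 𝒞)
  replace ht : IsSubobjectClassifier t := ht
  have hmono {A B X P : 𝒞} {f : A ⟶ B} {g : A ⟶ X} {h : B ⟶ P} {i : X ⟶ P}
      (H : IsPushout f g h i) [Mono f] : Mono i :=
    have := IsTopos.cartesianClosed X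
    ht.mono_of_isPushout H
  refine ⟨fun _ _ _ _ H _ => hmono H, fun _ _ _ _ H _ => ?_⟩
  have := hmono H
  exact ht.isPullback_of_isPushout H

/-- In a topos: (a) monomorphisms are stable under pushout, and (b)
every pushout square along a monomorphism is also a pullback square. -/
theorem stmt14 {𝒞 : Type u} [Category.{v} 𝒞] [IsTopos 𝒞] [HasFiniteColimits 𝒞] :
    (∀ {A B X P : 𝒞} (f : A ⟶ B) (g : A ⟶ X) (h : B ⟶ P) (i : X ⟶ P),
      IsPushout f g h i → Mono f → Mono i) ∧
    (∀ {A B X P : 𝒞} (f : A ⟶ B) (g : A ⟶ X) (h : B ⟶ P) (i : X ⟶ P),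
      IsPushout f g h i → Mono f → IsPullback f g h i) :=
  stmt14_general
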